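/- Let *∈{=,≠}, γ∈Pₙ, ψᵢ∈N_{n−i} for i=1,…,i₀, and α,β∈P_{n−i₀}, and suppose that ⟨γ*↓[ψ₁]…↓[ψ_{i₀}]α⟩∧¬⟨γ*↓[ψ₁]…↓[ψ_{i₀}]β⟩ is XP-consistent and that ¬⟨α≠α⟩ is a conjunct of ψ_{i₀}. Then ¬⟨α=β⟩ is a conjunct of ψ_{i₀}. -/

import Mathlib

/-!
Write `ψ` for `ψ_{i₀}` and `π ρ` for `↓[ψ₁]…↓[ψ_{i₀}]ρ`. If `ψ ≤ ⟨α=β⟩` were derivable, then, since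
also `ψ ≤ ¬⟨α≠α⟩`, all `α`-endpoints below a `ψ`-node share one data value, which is also reached
by `β`; so `⟨γ * π α⟩ ≤ ⟨γ * π β⟩` would be derivable and the hypothesis inconsistent. For `=` this
is axiom `neqAx10`. For `≠` split on `⟨α≠β⟩`: without it, use `neqAx9`; with it, `⟨α=β⟩` and
`neqAx7` give `⟨β≠β⟩`, so two `β`-endpoints differ and one of them differs from the end of `γ`.

Hence `ψ` does not entail `⟨α=β⟩`. At level `n - i₀ = 0` we have `α = β = ε`, and the hypothesis is
inconsistent outright. At a positive level `ψ` is a normal form, which carries `⟨α=β⟩` or its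
negation as a conjunct; it cannot be the former.
-/

attribute [local instance] Classical.propDecidable

mutual
inductive PathExpr (A : Type) : Type
  | eps : PathExpr A
  | down : PathExpr A
  | test : NodeExpr A → PathExpr A
  | comp : PathExpr A → PathExpr A → PathExpr A
  | union : PathExpr A → PathExpr A → PathExpr A

inductive NodeExpr (A : Type) : Type
  | lab : A → NodeExpr A
  | neg : NodeExpr A → NodeExpr A
  | conj : NodeExpr A → NodeExpr A → NodeExpr A
  | diam : PathExpr A → NodeExpr A
  | eqTest : PathExpr A → PathExpr A → NodeExpr A
  | neqTest : PathExpr A → PathExpr A → NodeExpr A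
end

namespace XPath

variable {A : Type}

/-- Defined disjunction `φ ∨ ψ := ¬(¬φ ∧ ¬ψ)`. -/
def nOr (φ ψ : NodeExpr A) : NodeExpr A := .neg (.conj (.neg φ) (.neg ψ))

/-- `⊤ := ⟨ε⟩`. -/
def topN : NodeExpr A := .diam .eps

/-- `⊥ := ¬⊤`. -/
def botN : NodeExpr A := .neg topN

/-- `⊥̄ := [¬⟨ε⟩]`. -/
def botP : PathExpr A := .test (.neg (.diam .eps))

def bigOr (l : List (NodeExpr A)) : NodeExpr A := l.foldr nOr botN

def bigUnion (l : List (PathExpr A)) : PathExpr A := l.foldr PathExpr.union botP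

/-- A data tree: a tree (connected, acyclic, unique parents except the root)
whose nodes carry labels from `A`, together with a partition of the nodes
(presented as an equivalence relation `eqd`). -/
structure DataTree (A : Type) where
  X : Type
  child : X → X → Prop
  root : X
  label : X → A
  eqd : X → X → Prop
  eqd_equiv : Equivalence eqd
  parent_unique : ∀ ⦃x y z : X⦄, child x z → child y z → x = y
  root_no_parent : ∀ x : X, ¬ child x root
  reach : ∀ x : X, Relation.ReflTransGen child root x
  acyclic : ∀ x : X, ¬ Relation.TransGen child x x

mutual
/-- Semantics of path expressions. -/
def psem (T : DataTree A) : PathExpr A → T.X → T.X → Prop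
  | .eps, x, y => x = y
  | .down, x, y => T.child x y
  | .test φ, x, y => x = y ∧ nsem T φ x
  | .comp α β, x, z => ∃ y, psem T α x y ∧ psem T β y z
  | .union α β, x, y => psem T α x y ∨ psem T β x y

/-- Semantics of node expressions. -/
def nsem (T : DataTree A) : NodeExpr A → T.X → Prop
  | .lab a, x => T.label x = a
  | .neg φ, x => ¬ nsem T φ x
  | .conj φ ψ, x => nsem T φ x ∧ nsem T ψ x
  | .diam α, x => ∃ y, psem T α x y
  | .eqTest α β, x => ∃ y z, psem T α x y ∧ psem T β x z ∧ T.eqd y z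
  | .neqTest α β, x => ∃ y z, psem T α x y ∧ psem T β x z ∧ ¬ T.eqd y z
end

/-- Semantic equivalence of node expressions: same denotation in every data tree. -/
def nodeValid (φ ψ : NodeExpr A) : Prop :=
  ∀ (T : DataTree A) (x : T.X), nsem T φ x ↔ nsem T ψ x

/-- Semantic equivalence of path expressions: same denotation in every data tree. -/
def pathValid (α β : PathExpr A) : Prop :=
  ∀ (T : DataTree A) (x y : T.X), psem T α x y ↔ psem T β x y

mutual
/-- Derivability of node equivalences in the axiomatic system `XP`. -/
inductive NDer {A : Type} [Fintype A] : NodeExpr A → NodeExpr A → Prop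
  | refl (φ : NodeExpr A) : NDer φ φ
  | symm {φ ψ : NodeExpr A} : NDer φ ψ → NDer ψ φ
  | trans {φ ψ ρ : NodeExpr A} : NDer φ ψ → NDer ψ ρ → NDer φ ρ
  | congr_neg {φ ψ : NodeExpr A} : NDer φ ψ → NDer (.neg φ) (.neg ψ)
  | congr_conj {φ φ' ψ ψ' : NodeExpr A} :
      NDer φ φ' → NDer ψ ψ' → NDer (.conj φ ψ) (.conj φ' ψ')
  | congr_diam {α β : PathExpr A} : PDer α β → NDer (.diam α) (.diam β)
  | congr_eqTest {α α' β β' : PathExpr A} :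
      PDer α α' → PDer β β' → NDer (.eqTest α β) (.eqTest α' β')
  | congr_neqTest {α α' β β' : PathExpr A} :
      PDer α α' → PDer β β' → NDer (.neqTest α β) (.neqTest α' β')
  | lbAx1 : NDer topN (bigOr ((Finset.univ : Finset A).toList.map NodeExpr.lab))
  | lbAx2 {a b : A} : a ≠ b → NDer botN (.conj (.lab a) (.lab b))
  | ndAx1 (φ ψ : NodeExpr A) :
      NDer φ (nOr (.neg (nOr (.neg φ) ψ)) (.neg (nOr (.neg φ) (.neg ψ))))
  | ndAx2 (φ : NodeExpr A) : NDer (.diam (.test φ)) φ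
  | ndAx3 (α β : PathExpr A) : NDer (.diam (.union α β)) (nOr (.diam α) (.diam β))
  | ndAx4 (α β : PathExpr A) : NDer (.diam (.comp α β)) (.diam (.comp α (.test (.diam β))))
  | eqAx1 (α β : PathExpr A) : NDer (.eqTest α β) (.eqTest β α)
  | eqAx2 (α β γ : PathExpr A) :
      NDer (.eqTest (.union α β) γ) (nOr (.eqTest α γ) (.eqTest β γ))
  | eqAx3 (φ : NodeExpr A) (α β : PathExpr A) :
      NDer (.conj φ (.eqTest α β)) (.eqTest (.comp (.test φ) α) β)
  | eqAx4 (α β : PathExpr A) : NDer (nOr (.eqTest α β) (.diam α)) (.diam α)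
  | eqAx5 (γ α β : PathExpr A) :
      NDer (nOr (.diam (.comp γ (.test (.eqTest α β)))) (.eqTest (.comp γ α) (.comp γ β)))
        (.eqTest (.comp γ α) (.comp γ β))
  | eqAx6 (α : PathExpr A) : NDer (.eqTest α α) (.diam α)
  | eqAx7 (α β : PathExpr A) :
      NDer (nOr (.conj (.eqTest α .eps) (.eqTest β .eps)) (.eqTest α β)) (.eqTest α β)
  | eqAx8 (α β γ : PathExpr A) :
      NDer (nOr (.eqTest α (.comp β (.test (.eqTest .eps γ)))) (.eqTest α (.comp β γ)))
        (.eqTest α (.comp β γ))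
  | neqAx1 (α β : PathExpr A) : NDer (.neqTest α β) (.neqTest β α)
  | neqAx2 (α β γ : PathExpr A) :
      NDer (.neqTest (.union α β) γ) (nOr (.neqTest α γ) (.neqTest β γ))
  | neqAx3 (φ : NodeExpr A) (α β : PathExpr A) :
      NDer (.conj φ (.neqTest α β)) (.neqTest (.comp (.test φ) α) β)
  | neqAx4 (α β : PathExpr A) : NDer (nOr (.neqTest α β) (.diam α)) (.diam α)
  | neqAx5 (γ α β : PathExpr A) :
      NDer (nOr (.diam (.comp γ (.test (.neqTest α β)))) (.neqTest (.comp γ α) (.comp γ β)))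
        (.neqTest (.comp γ α) (.comp γ β))
  | neqAx6 (α β γ η : PathExpr A) :
      NDer (nOr (.conj (.eqTest α γ) (.eqTest β η)) (nOr (.eqTest α β) (.neqTest γ η)))
        (nOr (.eqTest α β) (.neqTest γ η))
  | neqAx7 (α β γ η : PathExpr A) :
      NDer (nOr (.conj (.neqTest α γ) (.eqTest β η)) (nOr (.neqTest α β) (.neqTest γ η)))
        (nOr (.neqTest α β) (.neqTest γ η))
  | neqAx8 (α β γ η : PathExpr A) :
      NDer (nOr (.eqTest γ (.comp η (.comp (.test (.conj (.neg (.eqTest α β)) (.diam α))) β)))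
              (.neqTest γ (.comp η α)))
        (.neqTest γ (.comp η α))
  | neqAx9 (α β γ η : PathExpr A) :
      NDer (nOr (.neqTest γ (.comp η (.comp (.test (.conj (.neg (.neqTest α β)) (.diam α))) β)))
              (.neqTest γ (.comp η α)))
        (.neqTest γ (.comp η α))
  | neqAx10 (α β γ η : PathExpr A) :
      NDer (nOr (.eqTest γ (.comp η (.comp (.test (.conj (.neg (.neqTest α α)) (.eqTest α β))) α)))
              (.eqTest γ (.comp η β)))
        (.eqTest γ (.comp η β))

/-- Derivability of path equivalences in the axiomatic system `XP`. -/
inductive PDer {A : Type} [Fintype A] : PathExpr A → PathExpr A → Prop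
  | refl (α : PathExpr A) : PDer α α
  | symm {α β : PathExpr A} : PDer α β → PDer β α
  | trans {α β γ : PathExpr A} : PDer α β → PDer β γ → PDer α γ
  | congr_test {φ ψ : NodeExpr A} : NDer φ ψ → PDer (.test φ) (.test ψ)
  | congr_comp {α α' β β' : PathExpr A} :
      PDer α α' → PDer β β' → PDer (.comp α β) (.comp α' β')
  | congr_union {α α' β β' : PathExpr A} :
      PDer α α' → PDer β β' → PDer (.union α β) (.union α' β')
  | prAx1 (α β : PathExpr A) : PDer (.comp (.comp α (.test (.neg (.diam β)))) β) botP
  | prAx2 : PDer (.test topN) (.eps : PathExpr A)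
  | prAx3 (φ ψ : NodeExpr A) : PDer (.test (nOr φ ψ)) (.union (.test φ) (.test ψ))
  | isAx1 (α β γ : PathExpr A) : PDer (.union (.union α β) γ) (.union α (.union β γ))
  | isAx2 (α β : PathExpr A) : PDer (.union α β) (.union β α)
  | isAx3 (α : PathExpr A) : PDer (.union α α) α
  | isAx4 (α β γ : PathExpr A) : PDer (.comp α (.comp β γ)) (.comp (.comp α β) γ)
  | isAx5l (α : PathExpr A) : PDer (.comp .eps α) α
  | isAx5r (α : PathExpr A) : PDer (.comp α .eps) α
  | isAx6l (α β γ : PathExpr A) :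
      PDer (.comp α (.union β γ)) (.union (.comp α β) (.comp α γ))
  | isAx6r (α β γ : PathExpr A) :
      PDer (.comp (.union α β) γ) (.union (.comp α γ) (.comp β γ))
  | isAx7 (α : PathExpr A) : PDer (.union botP α) α
end

/-- A node expression is `XP`-consistent if it is not provably equivalent to `⊥`. -/
def NConsistent [Fintype A] (φ : NodeExpr A) : Prop := ¬ NDer φ botN

/-- A path expression is `XP`-consistent if it is not provably equivalent to `⊥̄`. -/
def PConsistent [Fintype A] (α : PathExpr A) : Prop := ¬ PDer α botP

/-- The normal form `a ∧ ⋀_{d ∈ C} d ∧ ⋀_{d ∈ D∖C} ¬d`, built along the canonical listing `D`. -/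
noncomputable def mkNF (a : A) (C D : List (NodeExpr A)) : NodeExpr A :=
  D.foldl (fun acc d => .conj acc (if d ∈ C then d else .neg d)) (.lab a)

/-- The canonical lists of normal-form path expressions (first component)
and normal-form node expressions (second component) at each level. -/
noncomputable def NF (A : Type) [Fintype A] : ℕ → List (PathExpr A) × List (NodeExpr A)
  | 0 =>
    ([.eps],
      (Finset.univ : Finset A).toList.map fun a =>
        NodeExpr.conj (.conj (.lab a) (.eqTest .eps .eps)) (.neg (.neqTest .eps .eps)))
  | n+1 =>
    let P := (NF A n).1
    let N := (NF A n).2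
    let P' : List (PathExpr A) :=
      .eps :: N.flatMap fun ψ => P.map fun β => PathExpr.comp .down (.comp (.test ψ) β)
    let D : List (NodeExpr A) :=
      (P'.flatMap fun α => P'.map fun β => NodeExpr.eqTest α β) ++
      (P'.flatMap fun α => P'.map fun β => NodeExpr.neqTest α β)
    let cands : List (NodeExpr A) :=
      D.sublists.flatMap fun C => (Finset.univ : Finset A).toList.map fun a => mkNF a C D
    (P', cands.filter fun φ => decide (NConsistent φ))

/-- `Pₙ`: normal-form path expressions of level `n`. -/
noncomputable def Pnf (A : Type) [Fintype A] (n : ℕ) : Set (PathExpr A) :=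
  {α | α ∈ (NF A n).1}

/-- `Nₙ`: normal-form node expressions of level `n`. -/
noncomputable def Nnf (A : Type) [Fintype A] (n : ℕ) : Set (NodeExpr A) :=
  {φ | φ ∈ (NF A n).2}

/-- `Dₙ`: data-aware diamonds between normal-form paths of level `n`. -/
noncomputable def Dnf (A : Type) [Fintype A] (n : ℕ) : Set (NodeExpr A) :=
  {φ | ∃ α ∈ Pnf A n, ∃ β ∈ Pnf A n, φ = NodeExpr.eqTest α β ∨ φ = NodeExpr.neqTest α β}

/-- The conjuncts of a node expression (flattening `∧`). -/
def conjuncts : NodeExpr A → List (NodeExpr A)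
  | .conj φ ψ => conjuncts φ ++ conjuncts ψ
  | φ => [φ]

/-- `δ` is a conjunct of `ψ`. -/
def IsConjunct (δ ψ : NodeExpr A) : Prop := δ ∈ conjuncts ψ

/-- Length of a path expression. -/
def plen : PathExpr A → ℕ
  | .eps => 0
  | .down => 1
  | .test _ => 0
  | .comp α β => plen α + plen β
  | .union α β => max (plen α) (plen β)

mutual
/-- Downward depth of a node expression. -/
def ndd : NodeExpr A → ℕ
  | .lab _ => 0
  | .neg φ => ndd φ
  | .conj φ ψ => max (ndd φ) (ndd ψ)
  | .diam α => pdd α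
  | .eqTest α β => max (pdd α) (pdd β)
  | .neqTest α β => max (pdd α) (pdd β)

/-- Downward depth of a path expression. -/
def pdd : PathExpr A → ℕ
  | .eps => 0
  | .down => 1
  | .test φ => ndd φ
  | .comp α β => max (max (pdd α) (pdd β)) (plen α + pdd β)
  | .union α β => max (pdd α) (pdd β)
end

/-- The path `↓[ψ₁]…↓[ψ_k]α`. -/
def prefixPath : List (NodeExpr A) → PathExpr A → PathExpr A
  | [], α => α
  | ψ :: l, α => .comp .down (.comp (.test ψ) (prefixPath l α))

/-- The path `↓[ψ]α`. -/
def dPath (ψ : NodeExpr A) (α : PathExpr A) : PathExpr A :=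
  .comp .down (.comp (.test ψ) α)

/-- A path expression whose leftmost symbol is `↓`. -/
def startsWithDown : PathExpr A → Prop
  | .down => True
  | .comp α _ => startsWithDown α
  | _ => False

/-- The subtree of `T` hanging from `x`, with the restricted partition. -/
def DataTree.restrict (T : DataTree A) (x : T.X) : DataTree A where
  X := {y : T.X // Relation.ReflTransGen T.child x y}
  child y z := T.child y.1 z.1
  root := ⟨x, Relation.ReflTransGen.refl⟩
  label y := T.label y.1
  eqd y z := T.eqd y.1 z.1
  eqd_equiv :=
    ⟨fun y => T.eqd_equiv.refl y.1, fun h => T.eqd_equiv.symm h,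
      fun h h' => T.eqd_equiv.trans h h'⟩
  parent_unique := by
    intro a b c hac hbc
    exact Subtype.ext (T.parent_unique hac hbc)
  root_no_parent := by
    intro y hy
    exact T.acyclic x (Relation.TransGen.tail' y.2 hy)
  reach := by
    rintro ⟨y, hy⟩
    induction hy with
    | refl => exact Relation.ReflTransGen.refl
    | @tail b c hxb hbc ih => exact Relation.ReflTransGen.tail (ih) hbc
  acyclic := by
    rintro y hy
    exact T.acyclic y.1 (Relation.TransGen.lift Subtype.val (fun _ _ h => h) _ _ hy)

end XPath

namespace XPath

variable {A : Type}

theorem prefixPath_append (l₁ l₂ : List (NodeExpr A)) (ρ : PathExpr A) :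
    prefixPath (l₁ ++ l₂) ρ = prefixPath l₁ (prefixPath l₂ ρ) := by
  induction l₁ with
  | nil => rfl
  | cons ψ l ih => simp [prefixPath, ih]

theorem prefixPath_eq_dropLast (l : List (NodeExpr A)) (hne : l ≠ []) (ρ : PathExpr A) :
    prefixPath l ρ = prefixPath l.dropLast (dPath (l.getLast hne) ρ) := by
  conv_lhs => rw [← List.dropLast_append_getLast hne, prefixPath_append]
  rfl

theorem conjuncts_foldl_conj (e : NodeExpr A → NodeExpr A) (D : List (NodeExpr A))
    (acc : NodeExpr A) :
    conjuncts (D.foldl (fun acc x => .conj acc (e x)) acc) =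
      conjuncts acc ++ D.flatMap fun x => conjuncts (e x) := by
  induction D generalizing acc with
  | nil => simp
  | cons x D ih => simp [ih, conjuncts]

theorem isConjunct_mkNF (a : A) (C : List (NodeExpr A)) {D : List (NodeExpr A)}
    {d : NodeExpr A} (hd : d ∈ D) (hatom : conjuncts d = [d]) :
    IsConjunct (if d ∈ C then d else .neg d) (mkNF a C D) := by
  rw [IsConjunct, mkNF, conjuncts_foldl_conj]
  refine List.mem_append_right _ (List.mem_flatMap.2 ⟨d, hd, ?_⟩)
  split_ifs <;> simp [hatom, conjuncts]

/-- `Dₙ₊₁` as listed inside `NF`, where `P` lists `Pₙ₊₁`. -/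
def diamonds (P : List (PathExpr A)) : List (NodeExpr A) :=
  (P.flatMap fun α => P.map fun β => NodeExpr.eqTest α β) ++
    (P.flatMap fun α => P.map fun β => NodeExpr.neqTest α β)

variable [Fintype A]

instance : Trans (NDer (A := A)) (NDer (A := A)) (NDer (A := A)) := ⟨NDer.trans⟩
instance : Trans (PDer (A := A)) (PDer (A := A)) (PDer (A := A)) := ⟨PDer.trans⟩

local infix:45 " ≡p " => PDer
local infix:45 " ≡n " => NDer

theorem nOr_congr {a a' b b' : NodeExpr A} (h1 : a ≡n a') (h2 : b ≡n b') :
    nOr a b ≡n nOr a' b' :=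
  NDer.congr_neg (NDer.congr_conj (NDer.congr_neg h1) (NDer.congr_neg h2))

def PLe (α β : PathExpr A) : Prop := PDer (.union α β) β

theorem PLe.of_der {α β : PathExpr A} (h : α ≡p β) : PLe α β :=
  ((PDer.congr_union h (PDer.refl β)).trans (PDer.isAx3 β))

theorem PLe.refl (α : PathExpr A) : PLe α α := PDer.isAx3 α

theorem PLe.trans {α β γ : PathExpr A} (h1 : PLe α β) (h2 : PLe β γ) : PLe α γ := by
  unfold PLe at *
  calc PathExpr.union α γ
      ≡p .union α (.union β γ) := PDer.congr_union (.refl _) h2.symm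
    _ ≡p .union (.union α β) γ := (PDer.isAx1 _ _ _).symm
    _ ≡p .union β γ := PDer.congr_union h1 (.refl _)
    _ ≡p γ := h2

theorem PLe.congr {a a' b b' : PathExpr A} (ha : a ≡p a') (hb : b ≡p b')
    (h : PLe a b) : PLe a' b' :=
  ((PDer.congr_union ha.symm hb.symm).trans h).trans hb

theorem PLe.left_union (a b : PathExpr A) : PLe a (.union a b) := by
  unfold PLe
  calc PathExpr.union a (.union a b)
      ≡p .union (.union a a) b := (PDer.isAx1 _ _ _).symm
    _ ≡p .union a b := PDer.congr_union (PDer.isAx3 a) (.refl b)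

theorem PLe.sup {a b c : PathExpr A} (h1 : PLe a c) (h2 : PLe b c) :
    PLe (.union a b) c := by
  unfold PLe at *
  calc PathExpr.union (.union a b) c
      ≡p .union a (.union b c) := PDer.isAx1 _ _ _
    _ ≡p .union a c := PDer.congr_union (.refl a) h2
    _ ≡p c := h1

theorem PLe.antisymm {a b : PathExpr A} (h1 : PLe a b) (h2 : PLe b a) : a ≡p b :=
  (h2.symm.trans (PDer.isAx2 b a)).trans h1

theorem PLe.bot (a : PathExpr A) : PLe botP a := PDer.isAx7 a

theorem PLe.comp_mono_left {a a' b : PathExpr A} (h : PLe a a') :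
    PLe (.comp a b) (.comp a' b) := by
  unfold PLe at *
  calc PathExpr.union (.comp a b) (.comp a' b)
      ≡p .comp (.union a a') b := (PDer.isAx6r _ _ _).symm
    _ ≡p .comp a' b := PDer.congr_comp h (.refl b)

theorem PLe.comp_mono_right {a b b' : PathExpr A} (h : PLe b b') :
    PLe (.comp a b) (.comp a b') := by
  unfold PLe at *
  calc PathExpr.union (.comp a b) (.comp a b')
      ≡p .comp a (.union b b') := (PDer.isAx6l _ _ _).symm
    _ ≡p .comp a b' := PDer.congr_comp (.refl a) h

theorem PLe.comp_mono {a a' b b' : PathExpr A} (h1 : PLe a a') (h2 : PLe b b') :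
    PLe (.comp a b) (.comp a' b') :=
  (PLe.comp_mono_left h1).trans (PLe.comp_mono_right h2)

/-! ### Boolean algebra of node expressions -/

-- `∨` inherits commutativity, associativity and idempotence from `∪` through `φ ≡ ⟨[φ]⟩`.
theorem diam_test (φ : NodeExpr A) : φ ≡n .diam (.test φ) := (NDer.ndAx2 φ).symm

theorem nOr_idem (φ : NodeExpr A) : nOr φ φ ≡n φ := by
  calc nOr φ φ
      ≡n .diam (.test (nOr φ φ)) := diam_test _
    _ ≡n .diam (.union (.test φ) (.test φ)) := NDer.congr_diam (PDer.prAx3 _ _)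
    _ ≡n .diam (.test φ) := NDer.congr_diam (PDer.isAx3 _)
    _ ≡n φ := NDer.ndAx2 φ

theorem nOr_comm (φ ψ : NodeExpr A) : nOr φ ψ ≡n nOr ψ φ := by
  calc nOr φ ψ
      ≡n .diam (.test (nOr φ ψ)) := diam_test _
    _ ≡n .diam (.union (.test φ) (.test ψ)) := NDer.congr_diam (PDer.prAx3 _ _)
    _ ≡n .diam (.union (.test ψ) (.test φ)) := NDer.congr_diam (PDer.isAx2 _ _)
    _ ≡n .diam (.test (nOr ψ φ)) := NDer.congr_diam (PDer.prAx3 _ _).symm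
    _ ≡n nOr ψ φ := NDer.ndAx2 _

theorem nOr_assoc (φ ψ ρ : NodeExpr A) : nOr (nOr φ ψ) ρ ≡n nOr φ (nOr ψ ρ) := by
  calc nOr (nOr φ ψ) ρ
      ≡n .diam (.test (nOr (nOr φ ψ) ρ)) := diam_test _
    _ ≡n .diam (.union (.test (nOr φ ψ)) (.test ρ)) := NDer.congr_diam (PDer.prAx3 _ _)
    _ ≡n .diam (.union (.union (.test φ) (.test ψ)) (.test ρ)) :=
        NDer.congr_diam (PDer.congr_union (PDer.prAx3 _ _) (.refl _))
    _ ≡n .diam (.union (.test φ) (.union (.test ψ) (.test ρ))) :=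
        NDer.congr_diam (PDer.isAx1 _ _ _)
    _ ≡n .diam (.union (.test φ) (.test (nOr ψ ρ))) :=
        NDer.congr_diam (PDer.congr_union (.refl _) (PDer.prAx3 _ _).symm)
    _ ≡n .diam (.test (nOr φ (nOr ψ ρ))) := NDer.congr_diam (PDer.prAx3 _ _).symm
    _ ≡n nOr φ (nOr ψ ρ) := NDer.ndAx2 _

theorem bot_nOr (φ : NodeExpr A) : nOr botN φ ≡n φ := by
  calc nOr botN φ
      ≡n .diam (.test (nOr botN φ)) := diam_test _
    _ ≡n .diam (.union (.test botN) (.test φ)) := NDer.congr_diam (PDer.prAx3 _ _)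
    _ ≡n .diam (.test φ) := NDer.congr_diam (PDer.isAx7 _)
    _ ≡n φ := NDer.ndAx2 φ

def NLe (φ ψ : NodeExpr A) : Prop := NDer (nOr φ ψ) ψ

theorem NLe.of_der {φ ψ : NodeExpr A} (h : φ ≡n ψ) : NLe φ ψ :=
  (nOr_congr h (NDer.refl ψ)).trans (nOr_idem ψ)

theorem NLe.refl (φ : NodeExpr A) : NLe φ φ := nOr_idem φ

theorem NLe.trans {a b c : NodeExpr A} (h1 : NLe a b) (h2 : NLe b c) : NLe a c := by
  unfold NLe at *
  calc nOr a c
      ≡n nOr a (nOr b c) := nOr_congr (.refl _) h2.symm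
    _ ≡n nOr (nOr a b) c := (nOr_assoc _ _ _).symm
    _ ≡n nOr b c := nOr_congr h1 (.refl _)
    _ ≡n c := h2

theorem NLe.congr {a a' b b' : NodeExpr A} (ha : a ≡n a') (hb : b ≡n b')
    (h : NLe a b) : NLe a' b' :=
  ((nOr_congr ha.symm hb.symm).trans h).trans hb

theorem NLe.sup {a b c : NodeExpr A} (h1 : NLe a c) (h2 : NLe b c) :
    NLe (nOr a b) c := by
  unfold NLe at *
  calc nOr (nOr a b) c
      ≡n nOr a (nOr b c) := nOr_assoc _ _ _
    _ ≡n nOr a c := nOr_congr (.refl a) h2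
    _ ≡n c := h1

theorem NLe.antisymm {a b : NodeExpr A} (h1 : NLe a b) (h2 : NLe b a) : a ≡n b :=
  (h2.symm.trans (nOr_comm b a)).trans h1

theorem NLe.bot (φ : NodeExpr A) : NLe botN φ := bot_nOr φ

theorem excluded_middle_neg (φ : NodeExpr A) : topN (A := A) ≡n nOr (.neg φ) (.neg (.neg φ)) := by
  calc topN (A := A)
      ≡n nOr (.neg (nOr (.neg topN) φ)) (.neg (nOr (.neg topN) (.neg φ))) :=
        NDer.ndAx1 topN φ
    _ ≡n nOr (.neg φ) (.neg (.neg φ)) :=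
        nOr_congr (NDer.congr_neg (bot_nOr φ)) (NDer.congr_neg (bot_nOr (.neg φ)))

theorem double_neg (φ : NodeExpr A) : NodeExpr.neg (.neg φ) ≡n φ := by
  refine NDer.symm ?_
  calc φ
      ≡n nOr (.neg (nOr (.neg φ) (.neg φ))) (.neg (nOr (.neg φ) (.neg (.neg φ)))) :=
        NDer.ndAx1 φ (.neg φ)
    _ ≡n nOr (.neg (.neg φ)) (.neg topN) :=
        nOr_congr (NDer.congr_neg (nOr_idem _)) (NDer.congr_neg (excluded_middle_neg φ).symm)
    _ ≡n nOr botN (.neg (.neg φ)) := nOr_comm _ _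
    _ ≡n .neg (.neg φ) := bot_nOr _

theorem excluded_middle (φ : NodeExpr A) : topN (A := A) ≡n nOr φ (.neg φ) :=
  (excluded_middle_neg (.neg φ)).trans (nOr_congr (double_neg φ) (double_neg (.neg φ)))

theorem deMorgan_conj (φ ψ : NodeExpr A) :
    NodeExpr.conj φ ψ ≡n .neg (nOr (.neg φ) (.neg ψ)) := by
  show _ ≡n .neg (.neg (.conj (.neg (.neg φ)) (.neg (.neg ψ))))
  exact (NDer.congr_conj (double_neg φ).symm (double_neg ψ).symm).trans (double_neg _).symm

theorem neg_conj (φ ψ : NodeExpr A) :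
    NodeExpr.neg (.conj φ ψ) ≡n nOr (.neg φ) (.neg ψ) :=
  ((NDer.congr_neg (deMorgan_conj φ ψ)).trans (double_neg _))

theorem split_on (φ ψ : NodeExpr A) :
    φ ≡n nOr (.conj φ ψ) (.conj φ (.neg ψ)) := by
  calc φ
      ≡n nOr (.neg (nOr (.neg φ) ψ)) (.neg (nOr (.neg φ) (.neg ψ))) := NDer.ndAx1 φ ψ
    _ ≡n nOr (.neg (nOr (.neg φ) (.neg (.neg ψ)))) (.neg (nOr (.neg φ) (.neg ψ))) :=
        nOr_congr (NDer.congr_neg (nOr_congr (.refl _) (double_neg ψ).symm)) (.refl _)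
    _ ≡n nOr (.conj φ (.neg ψ)) (.conj φ ψ) :=
        nOr_congr (deMorgan_conj φ (.neg ψ)).symm (deMorgan_conj φ ψ).symm
    _ ≡n nOr (.conj φ ψ) (.conj φ (.neg ψ)) := nOr_comm _ _

theorem conj_comm (φ ψ : NodeExpr A) : NodeExpr.conj φ ψ ≡n .conj ψ φ := by
  calc NodeExpr.conj φ ψ
      ≡n .neg (nOr (.neg φ) (.neg ψ)) := deMorgan_conj _ _
    _ ≡n .neg (nOr (.neg ψ) (.neg φ)) := NDer.congr_neg (nOr_comm _ _)
    _ ≡n .conj ψ φ := (deMorgan_conj _ _).symm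

theorem conj_assoc (φ ψ ρ : NodeExpr A) :
    NodeExpr.conj (.conj φ ψ) ρ ≡n .conj φ (.conj ψ ρ) := by
  calc NodeExpr.conj (.conj φ ψ) ρ
      ≡n .neg (nOr (.neg (.conj φ ψ)) (.neg ρ)) := deMorgan_conj _ _
    _ ≡n .neg (nOr (nOr (.neg φ) (.neg ψ)) (.neg ρ)) :=
        NDer.congr_neg (nOr_congr (neg_conj _ _) (.refl _))
    _ ≡n .neg (nOr (.neg φ) (nOr (.neg ψ) (.neg ρ))) := NDer.congr_neg (nOr_assoc _ _ _)
    _ ≡n .neg (nOr (.neg φ) (.neg (.conj ψ ρ))) :=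
        NDer.congr_neg (nOr_congr (.refl _) (neg_conj _ _).symm)
    _ ≡n .conj φ (.conj ψ ρ) := (deMorgan_conj _ _).symm

theorem top_nOr (φ : NodeExpr A) : nOr topN φ ≡n topN := by
  calc nOr topN φ
      ≡n nOr (nOr φ (.neg φ)) φ := nOr_congr (excluded_middle φ) (.refl _)
    _ ≡n nOr (nOr φ φ) (.neg φ) :=
        (nOr_comm _ _).trans (nOr_assoc φ φ (.neg φ)).symm
    _ ≡n nOr φ (.neg φ) := nOr_congr (nOr_idem φ) (.refl _)
    _ ≡n topN := (excluded_middle φ).symm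

theorem conj_neg_bot (φ : NodeExpr A) : NodeExpr.conj φ (.neg φ) ≡n botN := by
  calc NodeExpr.conj φ (.neg φ)
      ≡n .neg (nOr (.neg φ) (.neg (.neg φ))) := deMorgan_conj _ _
    _ ≡n .neg topN := NDer.congr_neg (excluded_middle_neg φ).symm
    _ ≡n botN := .refl _

theorem conj_le_left (φ ψ : NodeExpr A) : NLe (.conj φ ψ) φ := by
  unfold NLe
  calc nOr (.conj φ ψ) φ
      ≡n nOr (.conj φ ψ) (nOr (.conj φ ψ) (.conj φ (.neg ψ))) :=
        nOr_congr (.refl _) (split_on φ ψ)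
    _ ≡n nOr (nOr (.conj φ ψ) (.conj φ ψ)) (.conj φ (.neg ψ)) := (nOr_assoc _ _ _).symm
    _ ≡n nOr (.conj φ ψ) (.conj φ (.neg ψ)) := nOr_congr (nOr_idem _) (.refl _)
    _ ≡n φ := (split_on φ ψ).symm

theorem conj_le_right (φ ψ : NodeExpr A) : NLe (.conj φ ψ) ψ :=
  NLe.congr (conj_comm ψ φ) (.refl _) (conj_le_left ψ φ)

theorem eqv_conj_of_conj_neg_eqv_bot {ρ φ : NodeExpr A} (h : NodeExpr.conj ρ (.neg φ) ≡n botN) :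
    ρ ≡n .conj ρ φ :=
  calc ρ
      ≡n nOr (.conj ρ φ) (.conj ρ (.neg φ)) := split_on ρ φ
    _ ≡n nOr (.conj ρ φ) botN := nOr_congr (.refl _) h
    _ ≡n nOr botN (.conj ρ φ) := nOr_comm _ _
    _ ≡n .conj ρ φ := bot_nOr _

theorem NLe.absorb {ρ φ : NodeExpr A} (h : NLe ρ φ) : ρ ≡n .conj ρ φ := by
  refine eqv_conj_of_conj_neg_eqv_bot ?_
  calc NodeExpr.conj ρ (.neg φ)
      ≡n .neg (nOr (.neg ρ) (.neg (.neg φ))) := deMorgan_conj _ _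
    _ ≡n .neg (nOr (.neg ρ) φ) := NDer.congr_neg (nOr_congr (.refl _) (double_neg φ))
    _ ≡n .neg (nOr (.neg ρ) (nOr ρ φ)) := NDer.congr_neg (nOr_congr (.refl _) h.symm)
    _ ≡n .neg (nOr (nOr (.neg ρ) ρ) φ) := NDer.congr_neg (nOr_assoc _ _ _).symm
    _ ≡n .neg (nOr (nOr ρ (.neg ρ)) φ) := NDer.congr_neg (nOr_congr (nOr_comm _ _) (.refl _))
    _ ≡n .neg (nOr topN φ) := NDer.congr_neg (nOr_congr (excluded_middle ρ).symm (.refl _))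
    _ ≡n .neg topN := NDer.congr_neg (top_nOr φ)

theorem NLe.conj_glb {ρ φ ψ : NodeExpr A} (h1 : NLe ρ φ) (h2 : NLe ρ ψ) :
    NLe ρ (.conj φ ψ) := by
  have : ρ ≡n .conj ρ (.conj φ ψ) := by
    calc ρ
        ≡n .conj ρ ψ := h2.absorb
      _ ≡n .conj (.conj ρ φ) ψ := NDer.congr_conj h1.absorb (.refl _)
      _ ≡n .conj ρ (.conj φ ψ) := conj_assoc _ _ _
  exact NLe.congr this.symm (.refl _) (conj_le_right ρ (.conj φ ψ))

theorem NLe.conj_mono {a a' b b' : NodeExpr A} (h1 : NLe a a') (h2 : NLe b b') :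
    NLe (.conj a b) (.conj a' b') :=
  NLe.conj_glb ((conj_le_left a b).trans h1) ((conj_le_right a b).trans h2)

theorem disjunctive_syllogism (a b : NodeExpr A) : NLe (.conj (nOr a b) (.neg a)) b := by
  set z := NodeExpr.conj (nOr a b) (.neg a)
  have hz : NodeExpr.conj z (.neg b) ≡n botN :=
    calc NodeExpr.conj z (.neg b)
        ≡n .conj (nOr a b) (.conj (.neg a) (.neg b)) := conj_assoc _ _ _
      _ ≡n .conj (nOr a b) (.neg (nOr a b)) := NDer.congr_conj (.refl _) (double_neg _).symm
      _ ≡n botN := conj_neg_bot _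
  exact NLe.congr (eqv_conj_of_conj_neg_eqv_bot hz).symm (.refl _) (conj_le_right z b)

theorem not_consistent_of_le {X Y : NodeExpr A} (h : NLe X Y) :
    ¬ NConsistent (.conj X (.neg Y)) := fun hc =>
  hc <| NLe.antisymm ((NLe.conj_mono h (NLe.refl _)).trans (NLe.of_der (conj_neg_bot Y)))
    (NLe.bot _)

theorem NLe.of_isConjunct : ∀ {ψ δ : NodeExpr A}, IsConjunct δ ψ → NLe ψ δ
  | .conj a b, δ, h => by
    rcases List.mem_append.1 h with h | h
    · exact (conj_le_left a b).trans (NLe.of_isConjunct h)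
    · exact (conj_le_right a b).trans (NLe.of_isConjunct h)
  | .lab _, _, h | .neg _, _, h | .diam _, _, h | .eqTest _ _, _, h | .neqTest _ _, _, h => by
    rw [List.mem_singleton.1 h]; exact NLe.refl _

/-! ### Tests and data tests -/

theorem test_mono {φ ψ : NodeExpr A} (h : NLe φ ψ) :
    PLe (PathExpr.test φ) (.test ψ) := by
  unfold PLe
  calc PathExpr.union (.test φ) (.test ψ)
      ≡p .test (nOr φ ψ) := (PDer.prAx3 _ _).symm
    _ ≡p .test ψ := PDer.congr_test h

theorem test_le_eps (φ : NodeExpr A) : PLe (PathExpr.test φ) .eps := by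
  have heps : PathExpr.eps (A := A) ≡p .union (.test φ) (.test (.neg φ)) := by
    calc PathExpr.eps (A := A)
        ≡p .test topN := PDer.prAx2.symm
      _ ≡p .test (nOr φ (.neg φ)) := PDer.congr_test (excluded_middle φ)
      _ ≡p .union (.test φ) (.test (.neg φ)) := PDer.prAx3 _ _
  exact PLe.congr (.refl _) heps.symm (PLe.left_union _ _)

theorem neg_test_comp (φ : NodeExpr A) :
    PathExpr.comp (.test (.neg φ)) (.test φ) ≡p botP := by
  calc PathExpr.comp (.test (.neg φ)) (.test φ)
      ≡p .comp (.test (.neg (.diam (.test φ)))) (.test φ) :=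
        PDer.congr_comp (PDer.congr_test (NDer.congr_neg (diam_test φ))) (.refl _)
    _ ≡p .comp (.comp .eps (.test (.neg (.diam (.test φ))))) (.test φ) :=
        PDer.congr_comp (PDer.isAx5l _).symm (.refl _)
    _ ≡p botP := PDer.prAx1 .eps (.test φ)

theorem test_comp_neg (φ : NodeExpr A) :
    PathExpr.comp (.test φ) (.test (.neg φ)) ≡p botP := by
  calc PathExpr.comp (.test φ) (.test (.neg φ))
      ≡p .comp (.test (.neg (.neg φ))) (.test (.neg φ)) :=
        PDer.congr_comp (PDer.congr_test (double_neg φ).symm) (.refl _)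
    _ ≡p botP := neg_test_comp (.neg φ)

theorem union_bot (a : PathExpr A) : PathExpr.union a botP ≡p a :=
  (PDer.isAx2 _ _).trans (PDer.isAx7 a)

theorem test_idem (φ : NodeExpr A) :
    PathExpr.test φ ≡p .comp (.test φ) (.test φ) := by
  calc PathExpr.test φ
      ≡p .comp (.test φ) .eps := (PDer.isAx5r _).symm
    _ ≡p .comp (.test φ) (.test topN) := PDer.congr_comp (.refl _) PDer.prAx2.symm
    _ ≡p .comp (.test φ) (.test (nOr φ (.neg φ))) :=
        PDer.congr_comp (.refl _) (PDer.congr_test (excluded_middle φ))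
    _ ≡p .comp (.test φ) (.union (.test φ) (.test (.neg φ))) :=
        PDer.congr_comp (.refl _) (PDer.prAx3 _ _)
    _ ≡p .union (.comp (.test φ) (.test φ)) (.comp (.test φ) (.test (.neg φ))) :=
        PDer.isAx6l _ _ _
    _ ≡p .union (.comp (.test φ) (.test φ)) botP :=
        PDer.congr_union (.refl _) (test_comp_neg φ)
    _ ≡p .comp (.test φ) (.test φ) := union_bot _

theorem test_conj (φ ψ : NodeExpr A) :
    PathExpr.test (.conj φ ψ) ≡p .comp (.test φ) (.test ψ) := by
  refine PLe.antisymm ?_ ?_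
  · exact (PLe.of_der (test_idem _)).trans
      (PLe.comp_mono (test_mono (conj_le_left φ ψ)) (test_mono (conj_le_right φ ψ)))
  · have hφ : PathExpr.test φ ≡p
        .union (.test (.conj φ ψ)) (.test (.conj φ (.neg ψ))) := by
      calc PathExpr.test φ
          ≡p .test (nOr (.conj φ ψ) (.conj φ (.neg ψ))) := PDer.congr_test (split_on φ ψ)
        _ ≡p .union (.test (.conj φ ψ)) (.test (.conj φ (.neg ψ))) := PDer.prAx3 _ _
    have h1 : PathExpr.comp (.test φ) (.test ψ) ≡p
        .union (.comp (.test (.conj φ ψ)) (.test ψ))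
          (.comp (.test (.conj φ (.neg ψ))) (.test ψ)) :=
      (PDer.congr_comp hφ (.refl _)).trans (PDer.isAx6r _ _ _)
    refine (PLe.of_der h1).trans (PLe.sup ?_ ?_)
    · exact PLe.congr (.refl _) (PDer.isAx5r _)
        (PLe.comp_mono (PLe.refl _) (test_le_eps ψ))
    · refine PLe.trans (PLe.comp_mono_left (test_mono (conj_le_right φ (.neg ψ)))) ?_
      exact PLe.congr (neg_test_comp ψ).symm (.refl _) (PLe.bot _)

theorem test_absorb {φ ψ : NodeExpr A} (h : NLe φ ψ) :
    PathExpr.test φ ≡p .comp (.test φ) (.test ψ) := by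
  calc PathExpr.test φ
      ≡p .test (.conj φ ψ) := PDer.congr_test h.absorb
    _ ≡p .comp (.test φ) (.test ψ) := test_conj φ ψ

theorem diam_mono {a b : PathExpr A} (h : PLe a b) :
    NLe (NodeExpr.diam a) (.diam b) := by
  unfold NLe
  calc nOr (NodeExpr.diam a) (.diam b)
      ≡n .diam (.union a b) := (NDer.ndAx3 _ _).symm
    _ ≡n .diam b := NDer.congr_diam h

theorem eqTest_comm (a b : PathExpr A) : NodeExpr.eqTest a b ≡n .eqTest b a := NDer.eqAx1 a b

theorem neqTest_comm (a b : PathExpr A) : NodeExpr.neqTest a b ≡n .neqTest b a := NDer.neqAx1 a b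

theorem neqTest_mono_left {a a' : PathExpr A} (b : PathExpr A) (h : PLe a a') :
    NLe (NodeExpr.neqTest a b) (.neqTest a' b) := by
  unfold NLe
  calc nOr (NodeExpr.neqTest a b) (.neqTest a' b)
      ≡n .neqTest (.union a a') b := (NDer.neqAx2 _ _ _).symm
    _ ≡n .neqTest a' b := NDer.congr_neqTest h (.refl _)

theorem neqTest_mono_right {b b' : PathExpr A} (a : PathExpr A) (h : PLe b b') :
    NLe (NodeExpr.neqTest a b) (.neqTest a b') :=
  NLe.congr (neqTest_comm b a) (neqTest_comm b' a) (neqTest_mono_left a h)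

theorem neqTest_le_diam_left (a b : PathExpr A) : NLe (NodeExpr.neqTest a b) (.diam a) :=
  NDer.neqAx4 a b

theorem neqTest_le_diam_right (a b : PathExpr A) : NLe (NodeExpr.neqTest a b) (.diam b) :=
  NLe.congr (neqTest_comm b a) (.refl _) (neqTest_le_diam_left b a)

theorem eqTest_le_diam_left (a b : PathExpr A) : NLe (NodeExpr.eqTest a b) (.diam a) :=
  NDer.eqAx4 a b

theorem eqTest_le_diam_right (a b : PathExpr A) : NLe (NodeExpr.eqTest a b) (.diam b) :=
  NLe.congr (eqTest_comm b a) (.refl _) (eqTest_le_diam_left b a)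

theorem diam_comp_le (P a : PathExpr A) : NLe (NodeExpr.diam (.comp P a)) (.diam P) := by
  have h1 : NodeExpr.diam (.comp P a) ≡n .diam (.comp P (.test (.diam a))) :=
    NDer.ndAx4 P a
  refine NLe.congr h1.symm (NDer.congr_diam (PDer.isAx5r P)) ?_
  exact diam_mono (PLe.comp_mono (PLe.refl P) (test_le_eps _))

theorem eqTest_self (a : PathExpr A) : NodeExpr.eqTest a a ≡n .diam a := NDer.eqAx6 a

theorem neqTest_union_right (g u v : PathExpr A) :
    NodeExpr.neqTest g (.union u v) ≡n nOr (.neqTest g u) (.neqTest g v) := by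
  calc NodeExpr.neqTest g (.union u v)
      ≡n .neqTest (.union u v) g := neqTest_comm _ _
    _ ≡n nOr (.neqTest u g) (.neqTest v g) := NDer.neqAx2 _ _ _
    _ ≡n nOr (.neqTest g u) (.neqTest g v) := nOr_congr (neqTest_comm _ _) (neqTest_comm _ _)

theorem neqTest_self_conj_diam_le (P Q : PathExpr A) :
    NLe (.conj (.neqTest P P) (.diam Q)) (.neqTest Q P) := by
  have ax : NLe (.conj (.neqTest P P) (.eqTest Q Q)) (nOr (.neqTest P Q) (.neqTest P Q)) :=
    NDer.neqAx7 P Q P Q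
  have h1 : NLe (.conj (.neqTest P P) (.diam Q)) (.conj (.neqTest P P) (.eqTest Q Q)) :=
    NLe.conj_mono (NLe.refl _) (NLe.of_der (eqTest_self Q).symm)
  exact (h1.trans ax).trans (NLe.of_der ((nOr_idem _).trans (neqTest_comm P Q)))

/-! ### Paths below a prefix -/

theorem prefixPath_congr {δ δ' : PathExpr A} (l : List (NodeExpr A)) (h : δ ≡p δ') :
    prefixPath l δ ≡p prefixPath l δ' := by
  induction l with
  | nil => exact h
  | cons ψ l ih => exact PDer.congr_comp (.refl _) (PDer.congr_comp (.refl _) ih)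

theorem prefixPath_mono {u v : PathExpr A} (l : List (NodeExpr A)) (h : PLe u v) :
    PLe (prefixPath l u) (prefixPath l v) := by
  induction l with
  | nil => exact h
  | cons ψ l ih => exact PLe.comp_mono (PLe.refl _) (PLe.comp_mono (PLe.refl _) ih)

theorem prefixPath_comp (l : List (NodeExpr A)) (ζ ρ : PathExpr A) :
    prefixPath l (.comp ζ ρ) ≡p .comp (prefixPath l ζ) ρ := by
  induction l with
  | nil => exact .refl _
  | cons ψ l ih =>
    calc PathExpr.comp .down (.comp (.test ψ) (prefixPath l (.comp ζ ρ)))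
        ≡p .comp .down (.comp (.test ψ) (.comp (prefixPath l ζ) ρ)) :=
          PDer.congr_comp (.refl _) (PDer.congr_comp (.refl _) ih)
      _ ≡p .comp .down (.comp (.comp (.test ψ) (prefixPath l ζ)) ρ) :=
          PDer.congr_comp (.refl _) (PDer.isAx4 _ _ _)
      _ ≡p .comp (.comp .down (.comp (.test ψ) (prefixPath l ζ))) ρ := PDer.isAx4 _ _ _

theorem prefixPath_union (l : List (NodeExpr A)) (u v : PathExpr A) :
    prefixPath l (.union u v) ≡p .union (prefixPath l u) (prefixPath l v) := by
  induction l with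
  | nil => exact .refl _
  | cons ψ l ih =>
    calc PathExpr.comp .down (.comp (.test ψ) (prefixPath l (.union u v)))
        ≡p .comp .down (.comp (.test ψ) (.union (prefixPath l u) (prefixPath l v))) :=
          PDer.congr_comp (.refl _) (PDer.congr_comp (.refl _) ih)
      _ ≡p .comp .down (.union (.comp (.test ψ) (prefixPath l u))
            (.comp (.test ψ) (prefixPath l v))) :=
          PDer.congr_comp (.refl _) (PDer.isAx6l _ _ _)
      _ ≡p .union (.comp .down (.comp (.test ψ) (prefixPath l u)))
            (.comp .down (.comp (.test ψ) (prefixPath l v))) := PDer.isAx6l _ _ _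

theorem prefixPath_dPath (l : List (NodeExpr A)) (t : NodeExpr A) (ρ : PathExpr A) :
    prefixPath l (dPath t ρ) ≡p .comp (prefixPath l (.comp .down (.test t))) ρ :=
  (prefixPath_congr l (PDer.isAx4 _ _ _)).trans (prefixPath_comp l _ _)

theorem prefixPath_dPath_mono {t t' : NodeExpr A} (l : List (NodeExpr A)) (ρ : PathExpr A)
    (h : NLe t t') : PLe (prefixPath l (dPath t ρ)) (prefixPath l (dPath t' ρ)) :=
  prefixPath_mono l (PLe.comp_mono (PLe.refl _) (PLe.comp_mono (test_mono h) (PLe.refl _)))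

theorem prefixPath_dPath_insert_test {t θ : NodeExpr A} (l : List (NodeExpr A))
    (ρ : PathExpr A) (h : NLe t θ) :
    prefixPath l (dPath t ρ) ≡p
      .comp (prefixPath l (.comp .down (.test t))) (.comp (.test θ) ρ) := by
  calc prefixPath l (dPath t ρ)
      ≡p prefixPath l (.comp .down (.comp (.comp (.test t) (.test θ)) ρ)) :=
        prefixPath_congr l (PDer.congr_comp (.refl _) (PDer.congr_comp (test_absorb h) (.refl _)))
    _ ≡p prefixPath l (dPath t (.comp (.test θ) ρ)) :=
        prefixPath_congr l (PDer.congr_comp (.refl _) (PDer.isAx4 _ _ _).symm)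
    _ ≡p _ := prefixPath_dPath l t _

theorem prefixPath_dPath_split (l : List (NodeExpr A)) (t χ : NodeExpr A) (ρ : PathExpr A) :
    prefixPath l (dPath t ρ) ≡p
      .union (prefixPath l (dPath (.conj t χ) ρ)) (prefixPath l (dPath (.conj t (.neg χ)) ρ)) := by
  calc prefixPath l (dPath t ρ)
      ≡p prefixPath l (.comp .down (.comp
          (.union (.test (.conj t χ)) (.test (.conj t (.neg χ)))) ρ)) :=
        prefixPath_congr l (PDer.congr_comp (.refl _) (PDer.congr_comp
          ((PDer.congr_test (split_on t χ)).trans (PDer.prAx3 _ _)) (.refl _)))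
    _ ≡p prefixPath l (.union (dPath (.conj t χ) ρ) (dPath (.conj t (.neg χ)) ρ)) :=
        prefixPath_congr l ((PDer.congr_comp (.refl _) (PDer.isAx6r _ _ _)).trans
          (PDer.isAx6l _ _ _))
    _ ≡p _ := prefixPath_union l _ _

/-! ### Transfer from `α` to `β` below a node entailing `¬⟨α≠α⟩ ∧ ⟨α=β⟩` -/

section Transfer

variable {l : List (NodeExpr A)} {ψ : NodeExpr A} {α β : PathExpr A} (γ : PathExpr A)

theorem transfer_eqTest (hν : NLe ψ (.neg (.neqTest α α))) (hEq : NLe ψ (.eqTest α β)) :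
    NLe (.eqTest γ (prefixPath l (dPath ψ α))) (.eqTest γ (prefixPath l (dPath ψ β))) := by
  have hθ : NLe ψ (.conj (.neg (.neqTest α α)) (.eqTest α β)) := NLe.conj_glb hν hEq
  refine (NLe.of_der (NDer.congr_eqTest (.refl _) (prefixPath_dPath_insert_test l α hθ))).trans
    (NLe.trans ?_ (NLe.of_der (NDer.congr_eqTest (.refl _) (prefixPath_dPath l ψ β).symm)))
  exact NDer.neqAx10 α β γ _

theorem transfer_neqTest_of_not_neqTest (hEq : NLe ψ (.eqTest α β)) :
    NLe (.neqTest γ (prefixPath l (dPath (.conj ψ (.neg (.neqTest α β))) α)))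
      (.neqTest γ (prefixPath l (dPath ψ β))) := by
  set t := NodeExpr.conj ψ (.neg (.neqTest α β))
  have hτ : NLe t (.conj (.neg (.neqTest β α)) (.diam β)) :=
    NLe.conj_glb ((conj_le_right _ _).trans (NLe.of_der (NDer.congr_neg (neqTest_comm α β))))
      (((conj_le_left _ _).trans hEq).trans (eqTest_le_diam_right α β))
  have hax : NLe _ _ := NDer.neqAx9 β α γ (prefixPath l (.comp .down (.test t)))
  refine (NLe.of_der (NDer.congr_neqTest (.refl _) (prefixPath_dPath_insert_test l α hτ))).trans
    (hax.trans ?_)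
  refine (NLe.of_der (NDer.congr_neqTest (.refl _) (prefixPath_dPath l t β).symm)).trans ?_
  exact neqTest_mono_right γ (prefixPath_dPath_mono l β (conj_le_left _ _))

-- With `⟨α=β⟩`, `⟨α≠β⟩` and `¬⟨α≠α⟩`, axiom `neqAx7` leaves `⟨β≠β⟩`: two `β`-endpoints differ.
theorem transfer_neqTest_of_neqTest (hν : NLe ψ (.neg (.neqTest α α)))
    (hEq : NLe ψ (.eqTest α β)) :
    NLe (.neqTest γ (prefixPath l (dPath (.conj ψ (.neqTest α β)) α)))
      (.neqTest γ (prefixPath l (dPath ψ β))) := by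
  set t := NodeExpr.conj ψ (.neqTest α β)
  set P := prefixPath l (.comp .down (.test t))
  have hββ : NLe t (.neqTest β β) := by
    have h : NLe t (.conj (nOr (.neqTest α α) (.neqTest β β)) (.neg (.neqTest α α))) :=
      NLe.conj_glb ((NLe.conj_glb (conj_le_right _ _) ((conj_le_left _ _).trans hEq)).trans
        (NDer.neqAx7 α α β β)) ((conj_le_left _ _).trans hν)
    exact h.trans (disjunctive_syllogism _ _)
  have hP : P ≡p .comp P (.test (.neqTest β β)) :=
    (prefixPath_congr l (PDer.congr_comp (.refl _) (test_absorb hββ))).trans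
      (prefixPath_dPath l t _)
  have hdiff : NLe (.neqTest γ (prefixPath l (dPath t α))) (.neqTest (.comp P β) (.comp P β)) :=
    (((neqTest_le_diam_right γ _).trans
      (NLe.of_der (NDer.congr_diam (prefixPath_dPath l t α)))).trans (diam_comp_le P α)).trans
      ((NLe.of_der (NDer.congr_diam hP)).trans (NDer.neqAx5 P β β))
  refine ((NLe.conj_glb hdiff (neqTest_le_diam_left γ _)).trans
    (neqTest_self_conj_diam_le _ γ)).trans ?_
  refine (NLe.of_der (NDer.congr_neqTest (.refl _) (prefixPath_dPath l t β).symm)).trans ?_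
  exact neqTest_mono_right γ (prefixPath_dPath_mono l β (conj_le_left _ _))

theorem transfer_neqTest (hν : NLe ψ (.neg (.neqTest α α))) (hEq : NLe ψ (.eqTest α β)) :
    NLe (.neqTest γ (prefixPath l (dPath ψ α))) (.neqTest γ (prefixPath l (dPath ψ β))) :=
  (NLe.of_der ((NDer.congr_neqTest (.refl _)
    (prefixPath_dPath_split l ψ (.neqTest α β) α)).trans (neqTest_union_right _ _ _))).trans
    (NLe.sup (transfer_neqTest_of_neqTest γ hν hEq) (transfer_neqTest_of_not_neqTest γ hEq))

theorem transfer {star : PathExpr A → PathExpr A → NodeExpr A}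
    (hstar : star = NodeExpr.eqTest ∨ star = NodeExpr.neqTest)
    (hν : NLe ψ (.neg (.neqTest α α))) (hEq : NLe ψ (.eqTest α β)) :
    NLe (star γ (prefixPath l (dPath ψ α))) (star γ (prefixPath l (dPath ψ β))) := by
  rcases hstar with rfl | rfl
  exacts [transfer_eqTest γ hν hEq, transfer_neqTest γ hν hEq]

end Transfer

/-! ### Normal forms -/

theorem mem_Pnf_zero {α : PathExpr A} : α ∈ Pnf A 0 ↔ α = .eps := List.mem_singleton

theorem exists_mkNF_of_mem_Nnf_succ {m : ℕ} {ψ : NodeExpr A} (h : ψ ∈ Nnf A (m + 1)) :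
    ∃ (a : A) (C : List (NodeExpr A)), ψ = mkNF a C (diamonds (NF A (m + 1)).1) := by
  obtain ⟨hcand, -⟩ := List.mem_filter.1 h
  obtain ⟨C, -, hcand⟩ := List.mem_flatMap.1 hcand
  obtain ⟨a, -, rfl⟩ := List.mem_map.1 hcand
  exact ⟨a, C, rfl⟩

theorem mem_diamonds_of_mem_Dnf {n : ℕ} {d : NodeExpr A} (h : d ∈ Dnf A n) :
    d ∈ diamonds (NF A n).1 := by
  obtain ⟨α, hα, β, hβ, rfl | rfl⟩ := h
  · exact List.mem_append_left _ (List.mem_flatMap.2 ⟨α, hα, List.mem_map.2 ⟨β, hβ, rfl⟩⟩)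
  · exact List.mem_append_right _ (List.mem_flatMap.2 ⟨α, hα, List.mem_map.2 ⟨β, hβ, rfl⟩⟩)

theorem conjuncts_of_mem_Dnf {n : ℕ} {d : NodeExpr A} (h : d ∈ Dnf A n) :
    conjuncts d = [d] := by
  obtain ⟨α, -, β, -, rfl | rfl⟩ := h <;> rfl

theorem isConjunct_or_isConjunct_neg_of_mem_Dnf {m : ℕ} {ψ d : NodeExpr A}
    (hψ : ψ ∈ Nnf A (m + 1)) (hd : d ∈ Dnf A (m + 1)) :
    IsConjunct d ψ ∨ IsConjunct (.neg d) ψ := by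
  obtain ⟨a, C, rfl⟩ := exists_mkNF_of_mem_Nnf_succ hψ
  have h := isConjunct_mkNF a C (mem_diamonds_of_mem_Dnf hd) (conjuncts_of_mem_Dnf hd)
  split_ifs at h
  exacts [Or.inl h, Or.inr h]

end XPath

/-- Lemma A: if `⟨γ * ↓[ψ₁]…↓[ψ_{i₀}]α⟩ ∧ ¬⟨γ * ↓[ψ₁]…↓[ψ_{i₀}]β⟩` is
`XP`-consistent (for `*` either `=` or `≠`) and `¬⟨α ≠ α⟩` is a conjunct of
`ψ_{i₀}`, then `¬⟨α = β⟩` is a conjunct of `ψ_{i₀}`. -/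
theorem XPath.lemma_A {A : Type} [Fintype A] (hA : 1 < Fintype.card A)
    (star : PathExpr A → PathExpr A → NodeExpr A)
    (hstar : star = NodeExpr.eqTest ∨ star = NodeExpr.neqTest)
    (n : ℕ) (γ : PathExpr A) (hγ : γ ∈ Pnf A n)
    (ψs : List (NodeExpr A)) (hne : ψs ≠ []) (hlen : ψs.length ≤ n)
    (hψs : ∀ (i : ℕ) (h : i < ψs.length), ψs.get ⟨i, h⟩ ∈ Nnf A (n - (i + 1)))
    (α β : PathExpr A)
    (hα : α ∈ Pnf A (n - ψs.length)) (hβ : β ∈ Pnf A (n - ψs.length))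
    (hcons : NConsistent
      (NodeExpr.conj (star γ (prefixPath ψs α)) (.neg (star γ (prefixPath ψs β)))))
    (hconj : IsConjunct (.neg (.neqTest α α)) (ψs.getLast hne)) :
    IsConjunct (.neg (.eqTest α β)) (ψs.getLast hne) := by
  have hpos : 0 < ψs.length := List.length_pos_iff.2 hne
  have hψ : ψs.getLast hne ∈ Nnf A (n - ψs.length) := by
    have h := hψs (ψs.length - 1) (by omega)
    rwa [Nat.sub_add_cancel hpos, List.get_eq_getElem, ← List.getLast_eq_getElem] at h
  have hnot : ¬ NLe (ψs.getLast hne) (.eqTest α β) := fun hEq => by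
    refine not_consistent_of_le ?_ hcons
    rw [prefixPath_eq_dropLast ψs hne, prefixPath_eq_dropLast ψs hne]
    exact transfer γ hstar (NLe.of_isConjunct hconj) hEq
  cases hm : n - ψs.length with
  | zero =>
    rw [hm, mem_Pnf_zero] at hα hβ
    subst hα hβ
    exact absurd hcons (not_consistent_of_le (NLe.refl _))
  | succ m =>
    rw [hm] at hψ hα hβ
    exact (isConjunct_or_isConjunct_neg_of_mem_Dnf hψ ⟨α, hα, β, hβ, .inl rfl⟩).resolve_left
      fun h => hnot (NLe.of_isConjunct h)
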